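/- arXiv:0906.4396 — 2 statements merged into one kernel-verified Lean document; each statement's English description precedes it below -/
import Mathlib

section
/- Let R be a commutative ring and R' a subring of R (with the same identity), and let ι : R'⟨X₁,…,Xₙ⟩ → R⟨X₁,…,Xₙ⟩ be the canonical injective ring homomorphism between the free algebras induced by the inclusion R' ⊆ R (which is the identity on monomials). Fix a monomial ordering ≺ on the common standard monomial basis B. Then for a subset G ⊆ R'⟨X₁,…,Xₙ⟩, G is an LM-reduced monic Gröbner basis of the ideal ⟨G⟩ of R'⟨X₁,…,Xₙ⟩ if and only if ι(G) is an LM-reduced monic Gröbner basis of the ideal ⟨ι(G)⟩ of R⟨X₁,…,Xₙ⟩ with respect to the same ordering ≺. -/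
noncomputable section
open MonoidAlgebra
open scoped Classical

/-- Words in the alphabet `X_1, ..., X_n`: the standard monomial basis `B`. -/
abbrev Word (n : ℕ) : Type := FreeMonoid (Fin n)

/-- The free `R`-algebra `R⟨X_1, ..., X_n⟩`, realized as the monoid algebra of the
free monoid on `n` letters over `R`. -/
abbrev FreeAlg (R : Type) [CommRing R] (n : ℕ) : Type := MonoidAlgebra R (Word n)

variable {R : Type} [CommRing R] {n : ℕ}

/-- The monomial (word) `w` viewed as an element of the free algebra. -/
def mono (R : Type) [CommRing R] {n : ℕ} (w : Word n) : FreeAlg R n :=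
  MonoidAlgebra.of R (Word n) w

/-- A monomial ordering: a well-ordering on words compatible with two-sided multiplication. -/
def IsMonomialOrder (n : ℕ) [LinearOrder (Word n)] : Prop :=
  WellFoundedLT (Word n) ∧ ∀ w u v s : Word n, u < v → w * u * s < w * v * s

/-- The leading monomial of `f` (with junk value `1` for `f = 0`). -/
def LMon [LinearOrder (Word n)] (f : FreeAlg R n) : Word n :=
  if h : f = 0 then 1 else f.coeff.support.max' (Finsupp.support_nonempty_iff.mpr (mt MonoidAlgebra.coeff_eq_zero.mp h))

/-- The leading coefficient of `f`. -/
def LCoef [LinearOrder (Word n)] (f : FreeAlg R n) : R := f.coeff (LMon f)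

/-- `f` is monic: it is nonzero and its leading coefficient is `1`. -/
def IsMonic [LinearOrder (Word n)] (f : FreeAlg R n) : Prop := f ≠ 0 ∧ LCoef f = 1

/-- `v` divides `u` as words: `u = w * v * s` for some words `w, s`. -/
def MDvd {n : ℕ} (v u : Word n) : Prop := ∃ w s : Word n, u = w * v * s

/-- `G` is a monic Gröbner basis of the two-sided ideal `I`: every element of `G` is monic,
and the leading monomial of every nonzero element of `I` is divisible by the leading
monomial of some element of `G`. -/
def IsMonicGB [LinearOrder (Word n)] (G : Set (FreeAlg R n))
    (I : TwoSidedIdeal (FreeAlg R n)) : Prop :=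
  (∀ g ∈ G, IsMonic g) ∧ ∀ f ∈ I, f ≠ 0 → ∃ g ∈ G, MDvd (LMon g) (LMon f)

/-- `G` is LM-reduced: for distinct `g, g' ∈ G`, `LM(g)` does not divide `LM(g')`. -/
def LMReduced [LinearOrder (Word n)] (G : Set (FreeAlg R n)) : Prop :=
  ∀ g ∈ G, ∀ g' ∈ G, g ≠ g' → ¬ MDvd (LMon g) (LMon g')

/-- The canonical (injective, coefficientwise) map `R'⟨X⟩ → R⟨X⟩` induced by the
inclusion of the subring `R' ⊆ R`; it is the identity on monomials. -/
def incl (R' : Subring R) (f : FreeAlg (↥R') n) : FreeAlg R n :=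
  MonoidAlgebra.ofCoeff (Finsupp.mapRange (fun a : ↥R' => (a : R)) (by simp) f.coeff)

/-! `incl` preserves supports, hence leading monomials and monicity; this settles everything
except that a monic Gröbner basis `G` over `R'` stays one over `R`. For every word `u` divisible
by some `LM(g)`, a monomial multiple `w * g * s` gives a monic `p u ∈ ⟨G⟩` with `LM(p u) = u`.
Cancelling leading terms, the Gröbner property shows that `⟨G⟩` is the `R'`-span of the `p u`,
so `⟨incl G⟩` lies in the `R`-span of the `incl (p u)`. These are monic with pairwise distinct
leading monomials, so the leading monomial of a nonzero `R`-combination of them is one of the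
`u`. -/

section LeadingMonomial

variable [LinearOrder (Word n)]

lemma LMon_mem_support {f : FreeAlg R n} (hf : f ≠ 0) : LMon f ∈ f.coeff.support := by
  rw [LMon, dif_neg hf]
  exact Finset.max'_mem _ _

lemma le_LMon {f : FreeAlg R n} {u : Word n} (hu : u ∈ f.coeff.support) : u ≤ LMon f := by
  have hf : f ≠ 0 := by rintro rfl; simp at hu
  rw [LMon, dif_neg hf]
  exact Finset.le_max' _ _ hu

lemma LMon_eq_of_forall_le {f : FreeAlg R n} {u : Word n} (hu : u ∈ f.coeff.support)
    (hle : ∀ v ∈ f.coeff.support, v ≤ u) : LMon f = u :=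
  le_antisymm (hle _ (LMon_mem_support (by rintro rfl; simp at hu))) (le_LMon hu)

lemma LMon_add_of_lt {f g : FreeAlg R n} (hf : f ≠ 0)
    (hg : ∀ v ∈ g.coeff.support, v < LMon f) : LMon (f + g) = LMon f := by
  have hg0 : g.coeff (LMon f) = 0 := Finsupp.notMem_support_iff.mp fun h => (hg _ h).false
  apply LMon_eq_of_forall_le
  · simpa [Finsupp.mem_support_iff, hg0] using LMon_mem_support hf
  · intro v hv
    rcases Finset.mem_union.mp (Finsupp.support_add hv) with hv | hv
    exacts [le_LMon hv, (hg v hv).le]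

lemma coeff_smul_LMon {p : FreeAlg R n} (hp : IsMonic p) (c : R) :
    (c • p).coeff (LMon p) = c := by
  rw [MonoidAlgebra.coeff_smul, Finsupp.smul_apply, smul_eq_mul, ← LCoef, hp.2, mul_one]

lemma IsMonic.smul_ne_zero {p : FreeAlg R n} (hp : IsMonic p) {c : R} (hc : c ≠ 0) :
    c • p ≠ 0 :=
  fun h => hc (by simpa [h] using (coeff_smul_LMon hp c).symm)

lemma LMon_smul_of_isMonic {p : FreeAlg R n} (hp : IsMonic p) {c : R} (hc : c ≠ 0) :
    LMon (c • p) = LMon p :=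
  LMon_eq_of_forall_le (Finsupp.mem_support_iff.mpr (by rwa [coeff_smul_LMon hp]))
    fun _ hv => le_LMon (Finsupp.support_smul hv)

lemma LMon_sub_smul_lt {f p : FreeAlg R n} (hp : IsMonic p) (hpf : LMon p = LMon f)
    (hne : f - LCoef f • p ≠ 0) : LMon (f - LCoef f • p) < LMon f := by
  have hle : ∀ v ∈ (f - LCoef f • p).coeff.support, v ≤ LMon f := by
    intro v hv
    rcases Finset.mem_union.mp (Finsupp.support_sub hv) with hv | hv
    exacts [le_LMon hv, hpf ▸ le_LMon (Finsupp.support_smul hv)]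
  refine (hle _ (LMon_mem_support hne)).lt_of_ne fun heq => ?_
  have hcancel : (f - LCoef f • p).coeff (LMon f) = 0 := by
    rw [MonoidAlgebra.coeff_sub, Finsupp.sub_apply, ← hpf, coeff_smul_LMon hp, hpf, LCoef,
      sub_self]
  exact Finsupp.mem_support_iff.mp (heq ▸ LMon_mem_support hne) hcancel

end LeadingMonomial

section Span

variable [LinearOrder (Word n)] {p : Word n → FreeAlg R n} {S : Set (Word n)}

theorem LMon_mem_of_mem_span (hp : ∀ u ∈ S, IsMonic (p u) ∧ LMon (p u) = u) {f : FreeAlg R n}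
    (hf : f ∈ Submodule.span R (p '' S)) (hf0 : f ≠ 0) : LMon f ∈ S := by
  obtain ⟨c, hcS, rfl⟩ := (Finsupp.mem_span_image_iff_linearCombination R).mp hf
  rw [Finsupp.linearCombination_apply, Finsupp.sum] at hf0 ⊢
  have hsupp : ↑c.support ⊆ S := (Finsupp.mem_supported R c).mp hcS
  suffices key : ∀ t : Finset (Word n), ↑t ⊆ S →
      ∑ u ∈ t, c u • p u ≠ 0 → LMon (∑ u ∈ t, c u • p u) ∈ t from
    hsupp (key _ hsupp hf0)
  intro t
  induction t using Finset.induction_on_max with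
  | empty => simp
  | insert a t hlt ih =>
    intro hS hne
    have hat : a ∉ t := fun h => (hlt a h).false
    have htS : ↑t ⊆ S := fun x hx => hS (Finset.mem_insert_of_mem hx)
    have hmon := hp a (hS (Finset.mem_insert_self a t))
    rw [Finset.sum_insert hat] at hne ⊢
    by_cases hca : c a = 0
    · rw [hca, zero_smul, zero_add] at hne ⊢
      exact Finset.mem_insert_of_mem (ih htS hne)
    have hrest : ∀ v ∈ (∑ u ∈ t, c u • p u).coeff.support, v < LMon (c a • p a) := by
      intro v hv
      rw [LMon_smul_of_isMonic hmon.1 hca, hmon.2]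
      have hne' : ∑ u ∈ t, c u • p u ≠ 0 := by rintro h; simp [h] at hv
      exact (le_LMon hv).trans_lt (hlt _ (ih htS hne'))
    rw [LMon_add_of_lt (hmon.1.smul_ne_zero hca) hrest, LMon_smul_of_isMonic hmon.1 hca,
      hmon.2]
    exact Finset.mem_insert_self a t

theorem le_span_of_forall_LMon_mem [WellFoundedLT (Word n)] {I : Submodule R (FreeAlg R n)}
    (hp : ∀ u ∈ S, p u ∈ I ∧ IsMonic (p u) ∧ LMon (p u) = u)
    (hI : ∀ f ∈ I, f ≠ 0 → LMon f ∈ S) : I ≤ Submodule.span R (p '' S) := by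
  suffices key : ∀ u, ∀ f ∈ I, f ≠ 0 → LMon f = u → f ∈ Submodule.span R (p '' S) by
    intro f hf
    by_cases hf0 : f = 0
    · exact hf0 ▸ zero_mem _
    · exact key _ f hf hf0 rfl
  intro u
  induction u using WellFoundedLT.induction with
  | _ u ih =>
  rintro f hfI hf0 rfl
  have hS := hI f hfI hf0
  obtain ⟨hpI, hpm, hpf⟩ := hp _ hS
  rw [← sub_add_cancel f (LCoef f • p (LMon f))]
  refine add_mem ?_ (Submodule.smul_mem _ _ (Submodule.subset_span ⟨_, hS, rfl⟩))
  by_cases hr0 : f - LCoef f • p (LMon f) = 0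
  · exact hr0 ▸ zero_mem _
  exact ih _ (LMon_sub_smul_lt hpm hpf hr0) _ (I.sub_mem hfI (I.smul_mem _ hpI)) hr0 rfl

end Span

section MonomialMultiple

lemma coeff_mono_mul_mul (w s : Word n) (g : FreeAlg R n) (u : Word n) :
    (mono R w * g * mono R s).coeff (w * u * s) = g.coeff u := by
  rw [mono, mono, MonoidAlgebra.of_apply, MonoidAlgebra.of_apply,
    MonoidAlgebra.coeff_mul_single_eq_coeff_mul (w * u) (fun _ _ => mul_left_inj s),
    MonoidAlgebra.coeff_single_mul_eq_mul_coeff u (fun _ _ => mul_right_inj w), one_mul, mul_one]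

lemma mem_support_mono_mul_mul {w s v : Word n} {g : FreeAlg R n} :
    v ∈ (mono R w * g * mono R s).coeff.support ↔ ∃ u ∈ g.coeff.support, w * u * s = v := by
  rw [mono, mono, MonoidAlgebra.of_apply, MonoidAlgebra.of_apply,
    MonoidAlgebra.support_coeff_mul_single _ _ (by simp),
    MonoidAlgebra.support_coeff_single_mul _ _ (by simp)]
  simp

variable [LinearOrder (Word n)]

lemma LMon_mono_mul_mul (hord : IsMonomialOrder n) {g : FreeAlg R n} (hg : g ≠ 0)
    (w s : Word n) : LMon (mono R w * g * mono R s) = w * LMon g * s := by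
  refine LMon_eq_of_forall_le ?_ fun v hv => ?_
  · exact mem_support_mono_mul_mul.mpr ⟨_, LMon_mem_support hg, rfl⟩
  · obtain ⟨u, hu, rfl⟩ := mem_support_mono_mul_mul.mp hv
    exact (StrictMono.monotone fun _ _ h => hord.2 w _ _ s h) (le_LMon hu)

lemma IsMonic.mono_mul_mul (hord : IsMonomialOrder n) {g : FreeAlg R n} (hg : IsMonic g)
    (w s : Word n) : IsMonic (mono R w * g * mono R s) := by
  have hcoeff : (mono R w * g * mono R s).coeff (w * LMon g * s) = 1 := by
    rw [coeff_mono_mul_mul]; exact hg.2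
  refine ⟨fun h => ?_, by rw [LCoef, LMon_mono_mul_mul hord hg.1, hcoeff]⟩
  simpa [h] using
    (mem_support_mono_mul_mul (w := w) (s := s)).mpr ⟨_, LMon_mem_support hg.1, rfl⟩

lemma exists_isMonic_mem_span_LMon_eq (hord : IsMonomialOrder n) {G : Set (FreeAlg R n)}
    (hG : ∀ g ∈ G, IsMonic g) {u : Word n} (hu : ∃ g ∈ G, MDvd (LMon g) u) :
    ∃ q ∈ TwoSidedIdeal.span G, IsMonic q ∧ LMon q = u := by
  obtain ⟨g, hg, w, s, rfl⟩ := hu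
  exact ⟨mono R w * g * mono R s,
    TwoSidedIdeal.mul_mem_right _ _ _ (TwoSidedIdeal.mul_mem_left _ _ _
      (TwoSidedIdeal.subset_span hg)),
    (hG g hg).mono_mul_mul hord w s, LMon_mono_mul_mul hord (hG g hg).1 w s⟩

end MonomialMultiple

section BaseChange

variable {M B A : Type*} [Monoid M] [CommRing B] [CommRing A] [Algebra B A]

local notation "φ" => MonoidAlgebra.mapAlgHom M (Algebra.ofId B A)

lemma MonoidAlgebra.mapAlgHom_mul_mem_span_image (I : TwoSidedIdeal B[M]) (b : B[M])
    {x : A[M]} (hx : x ∈ Submodule.span A (φ '' I)) :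
    φ b * x ∈ Submodule.span A (φ '' I) ∧ x * φ b ∈ Submodule.span A (φ '' I) := by
  induction hx using Submodule.span_induction with
  | mem y hy =>
    obtain ⟨i, hi, rfl⟩ := hy
    rw [← map_mul, ← map_mul]
    exact ⟨Submodule.subset_span ⟨_, I.mul_mem_left _ _ hi, rfl⟩,
      Submodule.subset_span ⟨_, I.mul_mem_right _ _ hi, rfl⟩⟩
  | zero => simp
  | add y z _ _ hy hz => simpa [mul_add, add_mul] using ⟨add_mem hy.1 hz.1, add_mem hy.2 hz.2⟩
  | smul c y _ hy =>
    simpa [mul_smul_comm, smul_mul_assoc] using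
      ⟨Submodule.smul_mem _ c hy.1, Submodule.smul_mem _ c hy.2⟩

lemma MonoidAlgebra.mul_mem_span_image_mapAlgHom (I : TwoSidedIdeal B[M]) (a : A[M])
    {x : A[M]} (hx : x ∈ Submodule.span A (φ '' I)) :
    a * x ∈ Submodule.span A (φ '' I) ∧ x * a ∈ Submodule.span A (φ '' I) := by
  induction a using MonoidAlgebra.induction_linear with
  | zero => simp
  | add a b ha hb => simpa [add_mul, mul_add] using ⟨add_mem ha.1 hb.1, add_mem ha.2 hb.2⟩
  | single m c =>
    have hsingle : (single m c : A[M]) = c • φ (single m 1) := by simp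
    rw [hsingle, smul_mul_assoc, mul_smul_comm]
    have h := MonoidAlgebra.mapAlgHom_mul_mem_span_image I (single m 1) hx
    exact ⟨Submodule.smul_mem _ _ h.1, Submodule.smul_mem _ _ h.2⟩

theorem MonoidAlgebra.twoSidedSpan_image_mapAlgHom_subset (G : Set B[M]) :
    (TwoSidedIdeal.span (φ '' G) : Set A[M]) ⊆
      Submodule.span A (φ '' TwoSidedIdeal.span G) := by
  intro f hf
  induction hf using TwoSidedIdeal.span_induction with
  | mem x hx =>
    obtain ⟨g, hg, rfl⟩ := hx
    exact Submodule.subset_span ⟨g, TwoSidedIdeal.subset_span hg, rfl⟩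
  | zero => exact zero_mem _
  | add x y _ _ hx hy => exact add_mem hx hy
  | neg x _ hx => exact neg_mem hx
  | left_absorb a x _ hx => exact (MonoidAlgebra.mul_mem_span_image_mapAlgHom _ a hx).1
  | right_absorb b x _ hx => exact (MonoidAlgebra.mul_mem_span_image_mapAlgHom _ b hx).2

end BaseChange

section Incl

variable (R' : Subring R)

lemma incl_eq_mapAlgHom :
    incl R' (n := n) = MonoidAlgebra.mapAlgHom (Word n) (Algebra.ofId R' R) :=
  rfl

lemma incl_injective : Function.Injective (incl R' (n := n)) :=
  MonoidAlgebra.map_injective (R'.subtype : R' →+ R) Subtype.coe_injective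

lemma support_incl (f : FreeAlg R' n) : (incl R' f).coeff.support = f.coeff.support :=
  Finsupp.support_mapRange_of_injective (by simp) _ Subtype.coe_injective

lemma incl_eq_zero_iff {f : FreeAlg R' n} : incl R' f = 0 ↔ f = 0 := by
  rw [incl_eq_mapAlgHom]
  exact map_eq_zero_iff _ (incl_injective R')

lemma incl_mem_span_image {G : Set (FreeAlg R' n)} {f : FreeAlg R' n}
    (hf : f ∈ TwoSidedIdeal.span G) : incl R' f ∈ TwoSidedIdeal.span (incl R' '' G) := by
  have hle : TwoSidedIdeal.span G ≤ TwoSidedIdeal.comap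
      (MonoidAlgebra.mapAlgHom (Word n) (Algebra.ofId R' R)) (TwoSidedIdeal.span (incl R' '' G)) :=
    TwoSidedIdeal.span_le.mpr fun g hg => TwoSidedIdeal.subset_span ⟨g, hg, rfl⟩
  exact hle hf

variable [LinearOrder (Word n)]

lemma LMon_incl (f : FreeAlg R' n) : LMon (incl R' f) = LMon f := by
  by_cases hf : f = 0
  · rw [hf, (incl_eq_zero_iff R').mpr rfl]; rfl
  · exact LMon_eq_of_forall_le (support_incl R' f ▸ LMon_mem_support hf)
      fun v hv => le_LMon (support_incl R' f ▸ hv)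

lemma isMonic_incl_iff {f : FreeAlg R' n} : IsMonic (incl R' f) ↔ IsMonic f := by
  have hLC : LCoef (incl R' f) = LCoef f := by
    rw [LCoef, LCoef, LMon_incl]; rfl
  rw [IsMonic, IsMonic, hLC, ne_eq, incl_eq_zero_iff, OneMemClass.coe_eq_one]

lemma lmReduced_image_incl_iff {G : Set (FreeAlg R' n)} :
    LMReduced (incl R' '' G) ↔ LMReduced G := by
  simp only [LMReduced, Set.forall_mem_image, LMon_incl, (incl_injective R').ne_iff]

end Incl

section GroebnerBasis

variable [LinearOrder (Word n)] (R' : Subring R)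

theorem IsMonicGB.image_incl (hord : IsMonomialOrder n) {G : Set (FreeAlg R' n)}
    (hG : IsMonicGB G (TwoSidedIdeal.span G)) :
    IsMonicGB (incl R' '' G) (TwoSidedIdeal.span (incl R' '' G)) := by
  have := hord.1
  obtain ⟨hmon, hlead⟩ := hG
  set S : Set (Word n) := {u | ∃ g ∈ G, MDvd (LMon g) u}
  choose! p hpI hpm hpL using
    fun u (hu : u ∈ S) => exists_isMonic_mem_span_LMon_eq hord hmon hu
  have hspan : (TwoSidedIdeal.span G : Set (FreeAlg R' n)) ⊆ Submodule.span R' (p '' S) :=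
    le_span_of_forall_LMon_mem (I := (TwoSidedIdeal.span G).asIdeal.restrictScalars R')
      (fun u hu => ⟨hpI u hu, hpm u hu, hpL u hu⟩) hlead
  refine ⟨Set.forall_mem_image.mpr fun g hg => (isMonic_incl_iff R').mpr (hmon g hg),
    fun f hf hf0 => ?_⟩
  have hf' : f ∈ Submodule.span R ((incl R' ∘ p) '' S) := by
    refine Submodule.span_le.mpr ?_ (MonoidAlgebra.twoSidedSpan_image_mapAlgHom_subset G hf)
    rintro _ ⟨x, hx, rfl⟩
    rw [Set.image_comp]
    exact Submodule.span_le_restrictScalars R' R _ (Submodule.apply_mem_span_image_of_mem_span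
      (MonoidAlgebra.mapAlgHom (Word n) (Algebra.ofId R' R)).toLinearMap (hspan hx))
  obtain ⟨g, hg, hdvd⟩ := LMon_mem_of_mem_span (fun u hu =>
    ⟨(isMonic_incl_iff R').mpr (hpm u hu), (LMon_incl R' _).trans (hpL u hu)⟩) hf' hf0
  exact ⟨incl R' g, ⟨g, hg, rfl⟩, LMon_incl R' g ▸ hdvd⟩

theorem isMonicGB_image_incl_iff (hord : IsMonomialOrder n) {G : Set (FreeAlg R' n)} :
    IsMonicGB (incl R' '' G) (TwoSidedIdeal.span (incl R' '' G)) ↔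
      IsMonicGB G (TwoSidedIdeal.span G) := by
  refine ⟨fun ⟨hmon, hlead⟩ => ?_, IsMonicGB.image_incl R' hord⟩
  refine ⟨fun g hg => (isMonic_incl_iff R').mp (hmon _ ⟨g, hg, rfl⟩), fun f hf hf0 => ?_⟩
  obtain ⟨_, ⟨g, hg, rfl⟩, hdvd⟩ := hlead _ (incl_mem_span_image R' hf)
    (mt (incl_eq_zero_iff R').mp hf0)
  exact ⟨g, hg, by rwa [LMon_incl, LMon_incl] at hdvd⟩

end GroebnerBasis

/-- For a subring `R' ⊆ R` and `G ⊆ R'⟨X⟩`: `G` is an LM-reduced monic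
Gröbner basis of `⟨G⟩` in `R'⟨X⟩` iff its image is an LM-reduced monic Gröbner basis of
the ideal it generates in `R⟨X⟩`, with respect to the same monomial ordering. -/
theorem monicGB_subring_iff [LinearOrder (Word n)] (hord : IsMonomialOrder n)
    (R' : Subring R) (G : Set (FreeAlg (↥R') n)) :
    (LMReduced G ∧ IsMonicGB G (TwoSidedIdeal.span G)) ↔
      (LMReduced (incl R' '' G) ∧
        IsMonicGB (incl R' '' G) (TwoSidedIdeal.span (incl R' '' G))) := by
  rw [lmReduced_image_incl_iff, isMonicGB_image_incl_iff R' hord]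
end
end

section
/- Let R be a commutative ring, equip the free algebra R⟨X₁,…,Xₙ⟩ with a weight ℕ-gradation determined by positive integer degrees deg Xᵢ = nᵢ, let ≺ be an ℕ-graded monomial ordering on the standard monomial basis B, and let G be a monic Gröbner basis of the ideal I = ⟨G⟩. If the ℕ-leading homogeneous algebra R⟨X₁,…,Xₙ⟩/⟨LH(G)⟩ is a domain (nontrivial with no nonzero zero-divisors), then A = R⟨X₁,…,Xₙ⟩/I is a domain. -/
noncomputable section
open MonoidAlgebra
open scoped Classical

variable {R : Type} [CommRing R] {n : ℕ}

/-- The weight degree of a word, for the weights `deg Xᵢ = d i`. -/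
def wdeg {n : ℕ} (d : Fin n → ℕ) (w : Word n) : ℕ := ((FreeMonoid.toList w).map d).sum

/-- The maximal weight degree occurring in `f`. -/
def maxdeg (d : Fin n → ℕ) (f : FreeAlg R n) : ℕ := f.coeff.support.sup (wdeg d)

/-- The ℕ-leading homogeneous element `LH(f)` of `f`: the sum of the terms of `f` of
maximal weight degree. -/
def LH (d : Fin n → ℕ) (f : FreeAlg R n) : FreeAlg R n :=
  ∑ w ∈ f.coeff.support.filter (fun w => wdeg d w = maxdeg d f), MonoidAlgebra.single w (f.coeff w)

/-- The set `LH(S)` of leading homogeneous elements of the nonzero elements of `S`. -/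
def LHset (d : Fin n → ℕ) (S : Set (FreeAlg R n)) : Set (FreeAlg R n) :=
  {x | ∃ f ∈ S, f ≠ 0 ∧ x = LH d f}

/-- An ℕ-graded monomial ordering with respect to the weights `d`: a monomial ordering
such that words of smaller degree are smaller. -/
def IsGradedMonomialOrder {n : ℕ} (d : Fin n → ℕ) [LinearOrder (Word n)] : Prop :=
  IsMonomialOrder n ∧ ∀ u v : Word n, wdeg d u < wdeg d v → u < v

/-- The quotient ring of the free algebra by a two-sided ideal. -/
abbrev QuotRing (I : TwoSidedIdeal (FreeAlg R n)) : Type := I.ringCon.Quotient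

/-!
Take `a, b ∉ I` with `a * b ∈ I`. Since `≺` is a well-order, `a` and `b` can be replaced modulo
`I` by nonzero `f`, `g` whose leading monomials are divisible by no `LM(g')`, `g' ∈ G`.
Division by the monic Gröbner basis `G` is compatible with the grading, so the top homogeneous
part of every element of `I` lies in `J = ⟨LH(G)⟩`; for `f * g` this gives `LH(f) * LH(g) ∈ J`.
Conversely, every homogeneous component of an element of `J` is the top component of an element
of `I` of no larger degree. For `LH(f)` that element has the leading monomial of `f`, which is
impossible, so `LH(f) ∉ J` and likewise `LH(g) ∉ J`, contradicting that `R⟨X⟩/J` is a domain.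
Nontriviality: `1 ∈ I` would put `LH(1) = 1` into `J`.
-/

lemma TwoSidedIdeal.isDomain_quotient_iff {A : Type*} [Ring A] (I : TwoSidedIdeal A) :
    IsDomain I.ringCon.Quotient ↔ (1 : A) ∉ I ∧ ∀ a b : A, a * b ∈ I → a ∈ I ∨ b ∈ I := by
  have mk_eq_zero (a : A) : (a : I.ringCon.Quotient) = 0 ↔ a ∈ I := by
    rw [← RingCon.coe_zero, RingCon.eq, ← TwoSidedIdeal.mem_iff]
  rw [isDomain_iff_noZeroDivisors_and_nontrivial, ← not_subsingleton_iff_nontrivial,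
    ← subsingleton_iff_zero_eq_one, ← RingCon.coe_one, eq_comm, mk_eq_zero, and_comm]
  refine and_congr_right fun _ => ⟨fun h a b hab => ?_, fun h => ⟨fun {x y} hxy => ?_⟩⟩
  · have hab' : (a : I.ringCon.Quotient) * b = 0 := (mk_eq_zero _).mpr hab
    simpa only [mk_eq_zero] using h.eq_zero_or_eq_zero_of_mul_eq_zero hab'
  · obtain ⟨a, rfl⟩ := Quotient.exists_rep x
    obtain ⟨b, rfl⟩ := Quotient.exists_rep y
    exact (h a b ((mk_eq_zero _).mp hxy)).imp (mk_eq_zero a).mpr (mk_eq_zero b).mpr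

namespace FreeAlg

section Grading

variable (d : Fin n → ℕ)

lemma wdeg_mul (u v : Word n) : wdeg d (u * v) = wdeg d u + wdeg d v := by
  simp [wdeg]

lemma wdeg_one : wdeg d (1 : Word n) = 0 := by
  simp [wdeg]

def IsHomogeneous (m : ℕ) (f : FreeAlg R n) : Prop :=
  ∀ w ∈ f.coeff.support, wdeg d w = m

def homogeneousComponent (m : ℕ) : FreeAlg R n →ₗ[R] FreeAlg R n where
  toFun f := ofCoeff (f.coeff.filter fun w => wdeg d w = m)
  map_add' _ _ := MonoidAlgebra.ext Finsupp.filter_add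
  map_smul' _ _ := MonoidAlgebra.ext Finsupp.filter_smul

variable {d}

lemma coeff_homogeneousComponent (m : ℕ) (f : FreeAlg R n) (w : Word n) :
    (homogeneousComponent d m f).coeff w = if wdeg d w = m then f.coeff w else 0 :=
  Finsupp.filter_apply _ _ _

lemma support_homogeneousComponent_subset (m : ℕ) (f : FreeAlg R n) :
    (homogeneousComponent d m f).coeff.support ⊆ f.coeff.support := fun w => by
  simp only [Finsupp.mem_support_iff, coeff_homogeneousComponent]
  split_ifs <;> simp

lemma isHomogeneous_homogeneousComponent (m : ℕ) (f : FreeAlg R n) :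
    IsHomogeneous d m (homogeneousComponent d m f) := fun w hw => by
  by_contra h
  simp [coeff_homogeneousComponent, h] at hw

lemma isHomogeneous_single (v : Word n) (b : R) :
    IsHomogeneous d (wdeg d v) (single v b : FreeAlg R n) := fun w hw => by
  rw [Finset.mem_singleton.mp (Finsupp.support_single_subset hw)]

lemma isHomogeneous_one : IsHomogeneous d 0 (1 : FreeAlg R n) :=
  wdeg_one d ▸ isHomogeneous_single 1 1

lemma isHomogeneous_mul {i j : ℕ} {x y : FreeAlg R n} (hx : IsHomogeneous d i x)
    (hy : IsHomogeneous d j y) : IsHomogeneous d (i + j) (x * y) := fun w hw => by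
  obtain ⟨u, hu, v, hv, rfl⟩ := Finset.mem_mul.mp (support_coeff_mul_subset x y hw)
  rw [wdeg_mul, hx u hu, hy v hv]

lemma homogeneousComponent_of_isHomogeneous {i : ℕ} {x : FreeAlg R n}
    (hx : IsHomogeneous d i x) (m : ℕ) :
    homogeneousComponent d m x = if i = m then x else 0 := by
  ext w
  rw [coeff_homogeneousComponent]
  by_cases hw : w ∈ x.coeff.support
  · split_ifs <;> simp_all [hx w hw]
  · split_ifs <;> simp_all

lemma wdeg_le_maxdeg {f : FreeAlg R n} {w : Word n} (hw : w ∈ f.coeff.support) :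
    wdeg d w ≤ maxdeg d f :=
  Finset.le_sup hw

lemma maxdeg_zero : maxdeg d (0 : FreeAlg R n) = 0 := by
  simp [maxdeg]

lemma maxdeg_add_le (x y : FreeAlg R n) :
    maxdeg d (x + y) ≤ max (maxdeg d x) (maxdeg d y) :=
  Finset.sup_le fun _ hw =>
    (Finset.mem_union.mp (Finsupp.support_add hw)).elim
      (fun h => le_max_of_le_left (wdeg_le_maxdeg h))
      (fun h => le_max_of_le_right (wdeg_le_maxdeg h))

lemma maxdeg_le_of_isHomogeneous {i : ℕ} {x : FreeAlg R n} (hx : IsHomogeneous d i x) :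
    maxdeg d x ≤ i :=
  Finset.sup_le fun w hw => (hx w hw).le

lemma maxdeg_mul_le (x y : FreeAlg R n) : maxdeg d (x * y) ≤ maxdeg d x + maxdeg d y :=
  Finset.sup_le fun w hw => by
    obtain ⟨u, hu, v, hv, rfl⟩ := Finset.mem_mul.mp (support_coeff_mul_subset x y hw)
    exact wdeg_mul d u v ▸ add_le_add (wdeg_le_maxdeg hu) (wdeg_le_maxdeg hv)

lemma homogeneousComponent_eq_zero_of_maxdeg_lt {m : ℕ} {f : FreeAlg R n}
    (h : maxdeg d f < m) : homogeneousComponent d m f = 0 := by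
  ext w
  rw [coeff_homogeneousComponent]
  split_ifs with hw
  · by_contra hne
    have hw' : w ∈ f.coeff.support := Finsupp.mem_support_iff.mpr fun h0 => hne (by simp [h0])
    exact (wdeg_le_maxdeg hw').not_gt (hw ▸ h)
  · rfl

lemma LH_eq_homogeneousComponent (f : FreeAlg R n) :
    LH d f = homogeneousComponent d (maxdeg d f) f :=
  MonoidAlgebra.ext <| by
    rw [LH, MonoidAlgebra.coeff_sum]
    exact (Finsupp.filter_eq_sum _ _).symm

lemma isHomogeneous_LH (f : FreeAlg R n) : IsHomogeneous d (maxdeg d f) (LH d f) :=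
  LH_eq_homogeneousComponent f ▸ isHomogeneous_homogeneousComponent _ _

lemma homogeneousComponent_of_maxdeg_le {m : ℕ} {f : FreeAlg R n} (h : maxdeg d f ≤ m) :
    homogeneousComponent d m f = if maxdeg d f = m then LH d f else 0 := by
  split_ifs with heq
  · rw [LH_eq_homogeneousComponent, heq]
  · exact homogeneousComponent_eq_zero_of_maxdeg_lt (lt_of_le_of_ne h heq)

lemma sum_homogeneousComponent (f : FreeAlg R n) :
    ∑ k ∈ Finset.range (maxdeg d f + 1), homogeneousComponent d k f = f := by
  ext w
  simp only [MonoidAlgebra.coeff_sum, Finset.sum_apply', coeff_homogeneousComponent,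
    Finset.sum_ite_eq, Finset.mem_range, Nat.lt_succ_iff]
  split_ifs with hw
  · rfl
  · by_contra hne
    exact hw (wdeg_le_maxdeg (Finsupp.mem_support_iff.mpr fun h0 => hne (by simp [h0])))

lemma homogeneousComponent_mul_of_isHomogeneous_left {i : ℕ} {x : FreeAlg R n}
    (hx : IsHomogeneous d i x) (m : ℕ) (y : FreeAlg R n) :
    homogeneousComponent d m (x * y) =
      if i ≤ m then x * homogeneousComponent d (m - i) y else 0 := by
  induction y using MonoidAlgebra.induction with
  | zero => simp
  | single_add v b y _ _ ih =>
    rw [mul_add, map_add, ih, map_add, mul_add,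
      homogeneousComponent_of_isHomogeneous (isHomogeneous_mul hx (isHomogeneous_single v b)),
      homogeneousComponent_of_isHomogeneous (isHomogeneous_single v b)]
    split_ifs <;> first | rfl | (exfalso; omega) | simp

lemma homogeneousComponent_mul_of_isHomogeneous_right {j : ℕ} {y : FreeAlg R n}
    (hy : IsHomogeneous d j y) (m : ℕ) (x : FreeAlg R n) :
    homogeneousComponent d m (x * y) =
      if j ≤ m then homogeneousComponent d (m - j) x * y else 0 := by
  induction x using MonoidAlgebra.induction with
  | zero => simp
  | single_add v b x _ _ ih =>
    rw [add_mul, map_add, ih, map_add, add_mul,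
      homogeneousComponent_of_isHomogeneous (isHomogeneous_mul (isHomogeneous_single v b) hy),
      homogeneousComponent_of_isHomogeneous (isHomogeneous_single v b)]
    split_ifs <;> first | rfl | (exfalso; omega) | simp

lemma homogeneousComponent_maxdeg_add_mul (x y : FreeAlg R n) :
    homogeneousComponent d (maxdeg d x + maxdeg d y) (x * y) = LH d x * LH d y := by
  have hx : x * y = ∑ k ∈ Finset.range (maxdeg d x + 1), homogeneousComponent d k x * y := by
    rw [← Finset.sum_mul, sum_homogeneousComponent]
  rw [hx, map_sum, Finset.sum_eq_single_of_mem _ (Finset.self_mem_range_succ _)]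
  · rw [homogeneousComponent_mul_of_isHomogeneous_left (isHomogeneous_homogeneousComponent _ _),
      if_pos (Nat.le_add_right _ _), Nat.add_sub_cancel_left, ← LH_eq_homogeneousComponent,
      ← LH_eq_homogeneousComponent]
  · intro k hk hne
    have hk : k < maxdeg d x := lt_of_le_of_ne (Nat.lt_succ_iff.mp (Finset.mem_range.mp hk)) hne
    rw [homogeneousComponent_mul_of_isHomogeneous_left (isHomogeneous_homogeneousComponent _ _),
      if_pos (by omega),
      homogeneousComponent_eq_zero_of_maxdeg_lt (f := y) (by omega), mul_zero]

end Grading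

section Monomials

variable {d : Fin n → ℕ}

lemma isHomogeneous_mono (w : Word n) : IsHomogeneous d (wdeg d w) (mono R w) :=
  isHomogeneous_single w 1

lemma coeff_mono_mul_mul (w s : Word n) (f : FreeAlg R n) (u : Word n) :
    (mono R w * f * mono R s).coeff (w * u * s) = f.coeff u := by
  simp [mono]

lemma exists_of_mem_support_mono_mul_mul {w s v : Word n} {f : FreeAlg R n}
    (hv : v ∈ (mono R w * f * mono R s).coeff.support) :
    ∃ u ∈ f.coeff.support, v = w * u * s := by
  obtain ⟨x, hx, s', hs', rfl⟩ := Finset.mem_mul.mp (support_coeff_mul_subset _ _ hv)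
  obtain ⟨w', hw', u, hu, rfl⟩ := Finset.mem_mul.mp (support_coeff_mul_subset _ _ hx)
  rw [Finset.mem_singleton.mp (Finsupp.support_single_subset hw'),
    Finset.mem_singleton.mp (Finsupp.support_single_subset hs')]
  exact ⟨u, hu, rfl⟩

lemma smul_mono_mul_mul_mem {I : TwoSidedIdeal (FreeAlg R n)} {g : FreeAlg R n} (hg : g ∈ I)
    (c : R) (w s : Word n) : c • (mono R w * g * mono R s) ∈ I := by
  rw [Algebra.smul_def]
  exact I.mul_mem_left _ _ (I.mul_mem_right _ _ (I.mul_mem_left _ _ hg))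

lemma homogeneousComponent_mono_mul_mul (w s : Word n) (g : FreeAlg R n) :
    homogeneousComponent d (wdeg d w + maxdeg d g + wdeg d s) (mono R w * g * mono R s) =
      mono R w * LH d g * mono R s := by
  rw [homogeneousComponent_mul_of_isHomogeneous_right (isHomogeneous_mono s),
    if_pos (Nat.le_add_left _ _), Nat.add_sub_cancel,
    homogeneousComponent_mul_of_isHomogeneous_left (isHomogeneous_mono w),
    if_pos (Nat.le_add_right _ _), Nat.add_sub_cancel_left, ← LH_eq_homogeneousComponent]

end Monomials

section LeadingMonomial

variable [LinearOrder (Word n)] {d : Fin n → ℕ}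

lemma LMon_mem_support {f : FreeAlg R n} (hf : f ≠ 0) : LMon f ∈ f.coeff.support := by
  rw [LMon, dif_neg hf]
  exact Finset.max'_mem _ _

lemma le_LMon {f : FreeAlg R n} {w : Word n} (hw : w ∈ f.coeff.support) : w ≤ LMon f := by
  have hf : f ≠ 0 := by rintro rfl; simp at hw
  rw [LMon, dif_neg hf]
  exact Finset.le_max' _ _ hw

lemma LCoef_ne_zero {f : FreeAlg R n} (hf : f ≠ 0) : LCoef f ≠ 0 :=
  Finsupp.mem_support_iff.mp (LMon_mem_support hf)

lemma wdeg_le_wdeg_of_le (hgr : ∀ u v : Word n, wdeg d u < wdeg d v → u < v) {u v : Word n}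
    (h : u ≤ v) : wdeg d u ≤ wdeg d v :=
  not_lt.mp fun hlt => (hgr v u hlt).not_ge h

lemma wdeg_LMon (hgr : ∀ u v : Word n, wdeg d u < wdeg d v → u < v) {f : FreeAlg R n}
    (hf : f ≠ 0) : wdeg d (LMon f) = maxdeg d f :=
  le_antisymm (wdeg_le_maxdeg (LMon_mem_support hf))
    (Finset.sup_le fun _ hw => wdeg_le_wdeg_of_le hgr (le_LMon hw))

lemma LMon_homogeneousComponent (hgr : ∀ u v : Word n, wdeg d u < wdeg d v → u < v)
    {m : ℕ} {q : FreeAlg R n} (hq : maxdeg d q ≤ m) (h : homogeneousComponent d m q ≠ 0) :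
    LMon (homogeneousComponent d m q) = LMon q := by
  have hq0 : q ≠ 0 := by rintro rfl; exact h (map_zero _)
  have hsub := support_homogeneousComponent_subset (d := d) m q
  have hm : maxdeg d q = m := by
    have hw := LMon_mem_support h
    exact le_antisymm hq (isHomogeneous_homogeneousComponent m q _ hw ▸ wdeg_le_maxdeg (hsub hw))
  refine le_antisymm (le_LMon (hsub (LMon_mem_support h))) (le_LMon ?_)
  rw [Finsupp.mem_support_iff, coeff_homogeneousComponent, if_pos (hm ▸ wdeg_LMon hgr hq0)]
  exact LCoef_ne_zero hq0

lemma LH_ne_zero (hgr : ∀ u v : Word n, wdeg d u < wdeg d v → u < v) {f : FreeAlg R n}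
    (hf : f ≠ 0) : LH d f ≠ 0 := fun h => LCoef_ne_zero hf <| show f.coeff (LMon f) = 0 by
  simpa [LH_eq_homogeneousComponent, coeff_homogeneousComponent, wdeg_LMon hgr hf]
    using congrArg (fun x => x.coeff (LMon f)) h

lemma LMon_LH (hgr : ∀ u v : Word n, wdeg d u < wdeg d v → u < v) {f : FreeAlg R n}
    (hf : f ≠ 0) : LMon (LH d f) = LMon f := by
  have h := LH_ne_zero hgr hf
  rw [LH_eq_homogeneousComponent] at h ⊢
  exact LMon_homogeneousComponent hgr le_rfl h

lemma lt_LMon_of_mem_support_sub (hmul : ∀ w u v s : Word n, u < v → w * u * s < w * v * s)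
    {f g : FreeAlg R n} (hg : LCoef g = 1) {w s : Word n} (hL : LMon f = w * LMon g * s)
    {u : Word n} (hu : u ∈ (f - LCoef f • (mono R w * g * mono R s)).coeff.support) :
    u < LMon f := by
  have hle : u ≤ LMon f := by
    rcases Finset.mem_union.mp (Finsupp.support_sub hu) with hu | hu
    · exact le_LMon hu
    · obtain ⟨v, hv, rfl⟩ := exists_of_mem_support_mono_mul_mul (Finsupp.support_smul hu)
      rw [hL]
      rcases (le_LMon hv).eq_or_lt with h | h
      · rw [h]
      · exact (hmul w v _ s h).le
  refine hle.lt_of_ne ?_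
  rintro rfl
  have ht : (mono R w * g * mono R s).coeff (LMon f) = 1 := by
    rw [hL, coeff_mono_mul_mul]
    exact hg
  apply Finsupp.mem_support_iff.mp hu
  rw [MonoidAlgebra.coeff_sub, Finsupp.sub_apply, MonoidAlgebra.coeff_smul_apply, ht,
    smul_eq_mul, mul_one]
  exact sub_self _

lemma exists_reduced [WellFoundedLT (Word n)]
    (hmul : ∀ w u v s : Word n, u < v → w * u * s < w * v * s)
    {G : Set (FreeAlg R n)} {I : TwoSidedIdeal (FreeAlg R n)} (hGI : G ⊆ I)
    (hG : ∀ g ∈ G, LCoef g = 1) {a : FreeAlg R n} (ha : a ∉ I) :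
    ∃ f, f - a ∈ I ∧ f ≠ 0 ∧ ∀ g ∈ G, ¬ MDvd (LMon g) (LMon f) := by
  have ne_zero (f : FreeAlg R n) (hf : f - a ∈ I) : f ≠ 0 := by
    rintro rfl
    exact ha (by simpa using I.neg_mem hf)
  obtain ⟨f, hfa, hmin⟩ :=
    (wellFounded_lt.onFun (f := LMon)).has_min {f | f - a ∈ I} ⟨a, by simp⟩
  refine ⟨f, hfa, ne_zero f hfa, fun g hg ⟨w, s, hL⟩ => ?_⟩
  have hf'a : f - LCoef f • (mono R w * g * mono R s) - a ∈ I :=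
    sub_right_comm f _ a ▸ I.sub_mem hfa (smul_mono_mul_mul_mem (hGI hg) _ _ _)
  exact hmin _ hf'a
    (lt_LMon_of_mem_support_sub hmul (hG g hg) hL (LMon_mem_support (ne_zero _ hf'a)))

end LeadingMonomial

section Lifts

variable (d : Fin n → ℕ) (I : TwoSidedIdeal (FreeAlg R n))

def HasComponentLifts (z : FreeAlg R n) : Prop :=
  ∀ m, ∃ q ∈ I, maxdeg d q ≤ m ∧ homogeneousComponent d m q = homogeneousComponent d m z

variable {d I}

lemma hasComponentLifts_zero : HasComponentLifts d I 0 :=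
  fun _ => ⟨0, I.zero_mem, maxdeg_zero.trans_le (Nat.zero_le _), rfl⟩

lemma HasComponentLifts.add {x y : FreeAlg R n} (hx : HasComponentLifts d I x)
    (hy : HasComponentLifts d I y) : HasComponentLifts d I (x + y) := fun m => by
  obtain ⟨qx, hqx, hqx_le, hqx_eq⟩ := hx m
  obtain ⟨qy, hqy, hqy_le, hqy_eq⟩ := hy m
  exact ⟨qx + qy, I.add_mem hqx hqy, (maxdeg_add_le qx qy).trans (max_le hqx_le hqy_le),
    by rw [map_add, map_add, hqx_eq, hqy_eq]⟩

lemma HasComponentLifts.neg {x : FreeAlg R n} (hx : HasComponentLifts d I x) :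
    HasComponentLifts d I (-x) := fun m => by
  obtain ⟨q, hq, hq_le, hq_eq⟩ := hx m
  refine ⟨-q, I.neg_mem hq, ?_, by rw [map_neg, map_neg, hq_eq]⟩
  simpa [maxdeg] using hq_le

lemma HasComponentLifts.single_mul {z : FreeAlg R n} (hz : HasComponentLifts d I z)
    (u : Word n) (c : R) : HasComponentLifts d I (single u c * z) := fun m => by
  have hu := isHomogeneous_single (d := d) u c
  by_cases hum : wdeg d u ≤ m
  · obtain ⟨q, hq, hq_le, hq_eq⟩ := hz (m - wdeg d u)
    refine ⟨single u c * q, I.mul_mem_left _ _ hq, ?_, ?_⟩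
    · have := maxdeg_le_of_isHomogeneous hu
      exact (maxdeg_mul_le _ _).trans (by omega)
    · rw [homogeneousComponent_mul_of_isHomogeneous_left hu,
        homogeneousComponent_mul_of_isHomogeneous_left hu, hq_eq]
  · refine ⟨0, I.zero_mem, maxdeg_zero.trans_le (Nat.zero_le _), ?_⟩
    rw [map_zero, homogeneousComponent_mul_of_isHomogeneous_left hu, if_neg hum]

lemma HasComponentLifts.mul_single {z : FreeAlg R n} (hz : HasComponentLifts d I z)
    (u : Word n) (c : R) : HasComponentLifts d I (z * single u c) := fun m => by
  have hu := isHomogeneous_single (d := d) u c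
  by_cases hum : wdeg d u ≤ m
  · obtain ⟨q, hq, hq_le, hq_eq⟩ := hz (m - wdeg d u)
    refine ⟨q * single u c, I.mul_mem_right _ _ hq, ?_, ?_⟩
    · have := maxdeg_le_of_isHomogeneous hu
      exact (maxdeg_mul_le _ _).trans (by omega)
    · rw [homogeneousComponent_mul_of_isHomogeneous_right hu,
        homogeneousComponent_mul_of_isHomogeneous_right hu, hq_eq]
  · refine ⟨0, I.zero_mem, maxdeg_zero.trans_le (Nat.zero_le _), ?_⟩
    rw [map_zero, homogeneousComponent_mul_of_isHomogeneous_right hu, if_neg hum]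

lemma HasComponentLifts.mul_left {z : FreeAlg R n} (hz : HasComponentLifts d I z)
    (x : FreeAlg R n) : HasComponentLifts d I (x * z) := by
  induction x using MonoidAlgebra.induction_linear with
  | zero => simpa using hasComponentLifts_zero
  | add x y hx hy => simpa only [add_mul] using hx.add hy
  | single u c => exact hz.single_mul u c

lemma HasComponentLifts.mul_right {z : FreeAlg R n} (hz : HasComponentLifts d I z)
    (x : FreeAlg R n) : HasComponentLifts d I (z * x) := by
  induction x using MonoidAlgebra.induction_linear with
  | zero => simpa using hasComponentLifts_zero
  | add x y hx hy => simpa only [mul_add] using hx.add hy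
  | single u c => exact hz.mul_single u c

variable (d I) in
def componentLiftsIdeal : TwoSidedIdeal (FreeAlg R n) :=
  .mk' {z | HasComponentLifts d I z} hasComponentLifts_zero .add .neg (fun hz => hz.mul_left _)
    (fun hz => hz.mul_right _)

lemma mem_componentLiftsIdeal {z : FreeAlg R n} :
    z ∈ componentLiftsIdeal d I ↔ HasComponentLifts d I z :=
  TwoSidedIdeal.mem_mk' _ _ _ _ _ _ _

theorem hasComponentLifts_of_mem_span_LHset {S : Set (FreeAlg R n)} {z : FreeAlg R n}
    (hz : z ∈ TwoSidedIdeal.span (LHset d S)) : HasComponentLifts d (TwoSidedIdeal.span S) z := by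
  refine mem_componentLiftsIdeal.mp (TwoSidedIdeal.span_le.mpr (fun x hx => ?_) hz)
  rw [SetLike.mem_coe, mem_componentLiftsIdeal]
  obtain ⟨g, hg, -, rfl⟩ := hx
  intro m
  rw [homogeneousComponent_of_isHomogeneous (isHomogeneous_LH g)]
  split_ifs with hm
  · exact ⟨g, TwoSidedIdeal.subset_span hg, hm.le, by rw [← hm, LH_eq_homogeneousComponent]⟩
  · exact ⟨0, zero_mem _, maxdeg_zero.trans_le (Nat.zero_le _), map_zero _⟩

end Lifts

section GroebnerBasis

variable [LinearOrder (Word n)] {d : Fin n → ℕ} {G : Set (FreeAlg R n)}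

/-- Division by the monic Gröbner basis `G` respects the grading, so the top homogeneous part of
an element of `⟨G⟩` is a combination of the `w * LH(g) * s`. -/
theorem LH_mem_span_LHset (hord : IsGradedMonomialOrder d)
    (hGB : IsMonicGB G (TwoSidedIdeal.span G)) {h : FreeAlg R n}
    (hh : h ∈ TwoSidedIdeal.span G) : LH d h ∈ TwoSidedIdeal.span (LHset d G) := by
  obtain ⟨⟨hwf, hmul⟩, hgr⟩ := hord
  induction hw : LMon h using hwf.induction generalizing h with
  | ind w ih =>
    rcases eq_or_ne h 0 with rfl | h0
    · rw [LH_eq_homogeneousComponent, map_zero]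
      exact zero_mem _
    obtain ⟨g, hgG, u, s, hL⟩ := hGB.2 h hh h0
    obtain ⟨hg0, hg1⟩ := hGB.1 g hgG
    set t := LCoef h • (mono R u * g * mono R s)
    have hrest_lt (v) (hv : v ∈ (h - t).coeff.support) : v < LMon h :=
      lt_LMon_of_mem_support_sub hmul hg1 hL hv
    have hrest : homogeneousComponent d (maxdeg d h) (h - t) ∈
        TwoSidedIdeal.span (LHset d G) := by
      rcases eq_or_ne (h - t) 0 with h' | h'
      · rw [h', map_zero]
        exact zero_mem _
      have hrest_mem : h - t ∈ TwoSidedIdeal.span G :=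
        sub_mem hh (smul_mono_mul_mul_mem (TwoSidedIdeal.subset_span hgG) _ _ _)
      rw [homogeneousComponent_of_maxdeg_le (Finset.sup_le fun v hv =>
        wdeg_LMon hgr h0 ▸ wdeg_le_wdeg_of_le hgr (hrest_lt v hv).le)]
      split_ifs
      · exact ih _ (hw ▸ hrest_lt _ (LMon_mem_support h')) hrest_mem rfl
      · exact zero_mem _
    have hdeg : maxdeg d h = wdeg d u + maxdeg d g + wdeg d s := by
      rw [← wdeg_LMon hgr h0, hL, wdeg_mul, wdeg_mul, wdeg_LMon hgr hg0]
    have htop : homogeneousComponent d (maxdeg d h) t =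
        LCoef h • (mono R u * LH d g * mono R s) := by
      rw [map_smul, hdeg, homogeneousComponent_mono_mul_mul]
    have hLHg : LH d g ∈ LHset d G := ⟨g, hgG, hg0, rfl⟩
    have hsplit : LH d h = homogeneousComponent d (maxdeg d h) (h - t) +
        homogeneousComponent d (maxdeg d h) t := by
      rw [← map_add, sub_add_cancel, LH_eq_homogeneousComponent]
    rw [hsplit, htop]
    exact add_mem hrest (smul_mono_mul_mul_mem (TwoSidedIdeal.subset_span hLHg) _ _ _)

theorem homogeneousComponent_mem_span_LHset (hord : IsGradedMonomialOrder d)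
    (hGB : IsMonicGB G (TwoSidedIdeal.span G)) {h : FreeAlg R n}
    (hh : h ∈ TwoSidedIdeal.span G) {m : ℕ} (hm : maxdeg d h ≤ m) :
    homogeneousComponent d m h ∈ TwoSidedIdeal.span (LHset d G) := by
  rw [homogeneousComponent_of_maxdeg_le hm]
  split_ifs
  exacts [LH_mem_span_LHset hord hGB hh, zero_mem _]

theorem LH_notMem_span_LHset (hgr : ∀ u v : Word n, wdeg d u < wdeg d v → u < v)
    (hdvd : ∀ q ∈ TwoSidedIdeal.span G, q ≠ 0 → ∃ g ∈ G, MDvd (LMon g) (LMon q))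
    {f : FreeAlg R n} (hf : f ≠ 0) (hred : ∀ g ∈ G, ¬ MDvd (LMon g) (LMon f)) :
    LH d f ∉ TwoSidedIdeal.span (LHset d G) := fun hmem => by
  obtain ⟨q, hq, hq_le, hq_eq⟩ := hasComponentLifts_of_mem_span_LHset hmem (maxdeg d f)
  rw [homogeneousComponent_of_isHomogeneous (isHomogeneous_LH f), if_pos rfl] at hq_eq
  have hq0 : homogeneousComponent d (maxdeg d f) q ≠ 0 := hq_eq ▸ LH_ne_zero hgr hf
  have hLMon : LMon q = LMon f := by
    rw [← LMon_homogeneousComponent hgr hq_le hq0, hq_eq, LMon_LH hgr hf]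
  obtain ⟨g, hg, hdiv⟩ := hdvd q hq fun h => hq0 (by rw [h, map_zero])
  exact hred g hg (hLMon ▸ hdiv)

end GroebnerBasis

end FreeAlg

open FreeAlg in
theorem domain_lifts_general [LinearOrder (Word n)]
    (d : Fin n → ℕ) (hord : IsGradedMonomialOrder d)
    (G : Set (FreeAlg R n)) (hGB : IsMonicGB G (TwoSidedIdeal.span G))
    (hD : IsDomain (QuotRing (TwoSidedIdeal.span (LHset d G)))) :
    IsDomain (QuotRing (TwoSidedIdeal.span G)) := by
  obtain ⟨one_notMem, mem_or_mem⟩ := (TwoSidedIdeal.isDomain_quotient_iff _).mp hD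
  have := hord.1.1
  refine (TwoSidedIdeal.isDomain_quotient_iff _).mpr
    ⟨fun h1 => one_notMem ?_, fun a b hab => ?_⟩
  · have h1_top := homogeneousComponent_mem_span_LHset hord hGB h1
      (maxdeg_le_of_isHomogeneous isHomogeneous_one)
    simpa [homogeneousComponent_of_isHomogeneous isHomogeneous_one] using h1_top
  by_contra! ⟨ha, hb⟩
  have hmonic (g) (hg : g ∈ G) : LCoef g = 1 := (hGB.1 g hg).2
  obtain ⟨f, hfa, hf0, hf_red⟩ :=
    exists_reduced hord.1.2 TwoSidedIdeal.subset_span hmonic ha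
  obtain ⟨g, hgb, hg0, hg_red⟩ :=
    exists_reduced hord.1.2 TwoSidedIdeal.subset_span hmonic hb
  have hfg : f * g ∈ TwoSidedIdeal.span G := by
    rw [show f * g = (f - a) * g + a * (g - b) + a * b by noncomm_ring]
    exact add_mem (add_mem (TwoSidedIdeal.mul_mem_right _ _ _ hfa)
      (TwoSidedIdeal.mul_mem_left _ _ _ hgb)) hab
  have htop := homogeneousComponent_mem_span_LHset hord hGB hfg (maxdeg_mul_le f g)
  rw [homogeneousComponent_maxdeg_add_mul] at htop
  exact (mem_or_mem _ _ htop).elim (LH_notMem_span_LHset hord.2 hGB.2 hf0 hf_red)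
    (LH_notMem_span_LHset hord.2 hGB.2 hg0 hg_red)

/-- If `G` is a monic Gröbner basis of `I = ⟨G⟩` with respect to an
ℕ-graded monomial ordering and the ℕ-leading homogeneous algebra `R⟨X⟩/⟨LH(G)⟩` is a
domain, then `A = R⟨X⟩/I` is a domain. -/
theorem domain_lifts [LinearOrder (Word n)]
    (d : Fin n → ℕ) (hd : ∀ i, 0 < d i) (hord : IsGradedMonomialOrder d)
    (G : Set (FreeAlg R n)) (hGB : IsMonicGB G (TwoSidedIdeal.span G))
    (hD : IsDomain (QuotRing (TwoSidedIdeal.span (LHset d G)))) :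
    IsDomain (QuotRing (TwoSidedIdeal.span G)) :=
  domain_lifts_general d hord G hGB hD
end
end
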